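/- arXiv:1411.5851 — 2 statements merged into one kernel-verified Lean document; each statement's English description precedes it below -/
import Mathlib

section
/- Let G and H be topological groups (or Lie groups), V a locally convex space, and μ : G × V → V a map that is continuous and linear in the second argument. Let f : G → V be a map satisfying f(h·g) = f(g) + μ(g⁻¹, f(h)) for all g, h ∈ G. If f is smooth on some neighborhood of the identity of G, then f is smooth on all of G. -/
open scoped Manifold

theorem eq_add_apply_mul_inv_of_cocycle {G V : Type*} [Group G] [Add V] {μ : G → V → V}
    {f : G → V} (hcoc : ∀ g h : G, f (h * g) = f g + μ g⁻¹ (f h)) (g : G) :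
    f = fun x => f g + μ g⁻¹ (f (x * g⁻¹)) := by
  funext x
  simpa using hcoc g (x * g⁻¹)

section Cocycle

variable {𝕜 : Type*} [NontriviallyNormedField 𝕜]
  {E : Type*} [NormedAddCommGroup E] [NormedSpace 𝕜 E]
  {H : Type*} [TopologicalSpace H] {I : ModelWithCorners 𝕜 E H}
  {G : Type*} [TopologicalSpace G] [ChartedSpace H G] [Group G]
  {V : Type*} [NormedAddCommGroup V] [NormedSpace 𝕜 V]
  {μ : G → V →L[𝕜] V} {f : G → V}

theorem contMDiffAt_of_cocycle {n : WithTop ℕ∞} [ContMDiffMul I n G]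
    (hcoc : ∀ g h : G, f (h * g) = f g + μ g⁻¹ (f h))
    (h1 : ContMDiffAt I 𝓘(𝕜, V) n f 1) (g : G) : ContMDiffAt I 𝓘(𝕜, V) n f g := by
  have hright : ContMDiffAt I I n (fun x : G => x * g⁻¹) g :=
    (contMDiff_id.mul contMDiff_const).contMDiffAt
  have htranslate : ContMDiffAt I 𝓘(𝕜, V) n (fun x => f (x * g⁻¹)) g := by
    rw [← mul_inv_cancel g] at h1
    exact h1.comp g hright
  rw [eq_add_apply_mul_inv_of_cocycle (μ := fun g => μ g) hcoc g]
  exact contMDiffAt_const.add ((μ g⁻¹).contMDiff.contMDiffAt.comp g htranslate)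

end Cocycle

/-- If `f : G → V` (G a Lie group modelled on a locally convex space,
here a normed space, V a locally convex space, here a normed space) satisfies the
cocycle identity `f (h * g) = f g + μ g⁻¹ (f h)` for a map `μ : G × V → V` that is
continuous linear in the second argument, and `f` is smooth on some neighbourhood
of the identity, then `f` is smooth. -/
theorem stmt0
    {E : Type} [NormedAddCommGroup E] [NormedSpace ℝ E]
    {H : Type} [TopologicalSpace H] {I : ModelWithCorners ℝ E H}
    {G : Type} [TopologicalSpace G] [ChartedSpace H G] [Group G] [LieGroup I (⊤ : ℕ∞) G]
    {V : Type} [NormedAddCommGroup V] [NormedSpace ℝ V]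
    (μ : G → V →L[ℝ] V) (f : G → V)
    (hcoc : ∀ g h : G, f (h * g) = f g + μ g⁻¹ (f h))
    (U : Set G) (hU : U ∈ nhds (1 : G))
    (hf : ContMDiffOn I 𝓘(ℝ, V) (⊤ : ℕ∞) f U) :
    ContMDiff I 𝓘(ℝ, V) (⊤ : ℕ∞) f :=
  contMDiffAt_of_cocycle hcoc (hf.contMDiffAt hU)
end

section
/- Let M be a connected finite-dimensional smooth manifold, E a finite-dimensional vector space, and θ ∈ Ω¹(M,E) a smooth 1-form. Suppose that for all smooth closed curves α₀, α₁ : [0,1] → M that are smoothly homotopic relative to {0,1}, one has ∫_{α₀} θ = ∫_{α₁} θ. Then θ is closed, i.e., dθ = 0. -/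
open scoped Manifold ContDiff
open Set

/-!
Pull `θ` back along a smooth map `σ : ℝ × ℝ → M` to a field `η` of covectors on the plane. Since
the plane is contractible, `σ ∘ γ` is homotopic rel endpoints to a constant loop for every smooth
loop `γ`, so all loop integrals of `η` vanish. Integrating `η` over the rescaled loops `x + r • c`
and differentiating at `r = 0` gives `∫ dη_x (c t) (c' t) dt = 0`; for a polynomial loop `c`
enclosing signed area `1 / 60` in the coordinates `(u, v)`, this integral is
`(dη_x u v - dη_x v u) / 60`.
-/

section LoopIntegrals

variable {E : Type*} [NormedAddCommGroup E] [NormedSpace ℝ E]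
  {F : Type*} [NormedAddCommGroup F] [NormedSpace ℝ F]

theorem hasDerivAt_intervalIntegral_of_continuous {f f' : ℝ → ℝ → E}
    (hf : Continuous fun p : ℝ × ℝ => f p.1 p.2)
    (hf' : Continuous fun p : ℝ × ℝ => f' p.1 p.2)
    (hd : ∀ r t, HasDerivAt (fun r => f r t) (f' r t) r) (a b r₀ : ℝ) :
    HasDerivAt (fun r => ∫ t in a..b, f r t) (∫ t in a..b, f' r₀ t) r₀ := by
  obtain ⟨C, hC⟩ := ((isCompact_closedBall r₀ 1).prod (isCompact_uIcc (a := a) (b := b)))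
    |>.exists_bound_of_continuousOn hf'.continuousOn
  have hslice {g : ℝ → ℝ → E} (hg : Continuous fun p : ℝ × ℝ => g p.1 p.2) (r : ℝ) :
      Continuous (g r) :=
    hg.comp (continuous_const.prodMk continuous_id)
  refine (intervalIntegral.hasDerivAt_integral_of_dominated_loc_of_deriv_le
    (bound := fun _ => C) (Metric.ball_mem_nhds r₀ one_pos)
    (.of_forall fun r => (hslice hf r).aestronglyMeasurable)
    ((hslice hf r₀).intervalIntegrable _ _) (hslice hf' r₀).aestronglyMeasurable ?_
    intervalIntegrable_const (.of_forall fun t _ r _ => hd r t)).2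
  exact .of_forall fun t ht r hr =>
    hC (r, t) ⟨Metric.ball_subset_closedBall hr, uIoc_subset_uIcc ht⟩

theorem integral_fderiv_loop_eq_zero {η : F → F →L[ℝ] E} (hη : ContDiff ℝ 1 η)
    (hloop : ∀ γ : ℝ → F, ContDiff ℝ ∞ γ → γ 0 = γ 1 →
      ∫ t in (0:ℝ)..1, η (γ t) (deriv γ t) = 0)
    (x : F) {c : ℝ → F} (hc : ContDiff ℝ ∞ c) (hc01 : c 0 = c 1) :
    ∫ t in (0:ℝ)..1, fderiv ℝ η x (c t) (deriv c t) = 0 := by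
  set G : ℝ → E := fun r => ∫ t in (0:ℝ)..1, η (x + r • c t) (deriv c t)
  have hc' : Continuous (deriv c) := hc.continuous_deriv (by simp)
  have hG : ∀ r,
      HasDerivAt G (∫ t in (0:ℝ)..1, fderiv ℝ η (x + r • c t) (c t) (deriv c t)) r := by
    refine hasDerivAt_intervalIntegral_of_continuous (by fun_prop) ?_ (fun r t => ?_) 0 1
    · exact ((hη.continuous_fderiv one_ne_zero).comp (by fun_prop)).clm_apply
        (hc.continuous.comp continuous_snd) |>.clm_apply (hc'.comp continuous_snd)
    · exact (((hη.differentiable one_ne_zero _).hasFDerivAt.comp_hasDerivAt r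
        (((hasDerivAt_id r).smul_const (c t)).const_add x)).clm_apply
          (hasDerivAt_const r _)).congr_deriv (by simp)
  -- `r • G r` is the integral of `η` over the loop `x + r • c`.
  have hG_ne : ∀ r ≠ 0, G r = 0 := by
    intro r hr
    have hderiv (t : ℝ) : deriv (fun t => x + r • c t) t = r • deriv c t :=
      (((hc.differentiable (by simp) t).hasDerivAt.const_smul r).const_add x).deriv
    have h := hloop (fun t => x + r • c t) (contDiff_const.add (hc.const_smul r))
      (by simp [hc01])
    simp only [hderiv, map_smul, intervalIntegral.integral_smul] at h
    exact (smul_eq_zero.mp h).resolve_left hr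
  have hG_eq_zero : G = 0 :=
    Continuous.ext_on (dense_compl_singleton 0)
      (continuous_iff_continuousAt.2 fun r => (hG r).continuousAt) continuous_const hG_ne
  have h := hG 0
  rw [hG_eq_zero] at h
  simpa using h.unique (hasDerivAt_const 0 0)

/-- A loop enclosing signed area `1 / 60` in the coordinates `(u, v)`. -/
def polynomialLoop (u v : F) (t : ℝ) : F := (t - t ^ 2) • u + (t ^ 2 - t ^ 3) • v

theorem deriv_polynomialLoop (u v : F) (t : ℝ) :
    deriv (polynomialLoop u v) t = (1 - 2 * t) • u + (2 * t - 3 * t ^ 2) • v :=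
  ((((hasDerivAt_id t).sub (hasDerivAt_pow 2 t)).smul_const u).add
    (((hasDerivAt_pow 2 t).sub (hasDerivAt_pow 3 t)).smul_const v)).congr_deriv (by norm_num)
    |>.deriv

theorem integral_apply_polynomialLoop [CompleteSpace E] (B : F →L[ℝ] F →L[ℝ] E) (u v : F) :
    ∫ t in (0:ℝ)..1, B (polynomialLoop u v t) (deriv (polynomialLoop u v) t)
      = (1 / 60 : ℝ) • (B u v - B v u) := by
  have hexpand (t : ℝ) :
      B (polynomialLoop u v t) (deriv (polynomialLoop u v) t) =
        ((t - t ^ 2) * (1 - 2 * t)) • B u u + ((t - t ^ 2) * (2 * t - 3 * t ^ 2)) • B u v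
          + ((t ^ 2 - t ^ 3) * (1 - 2 * t)) • B v u
          + ((t ^ 2 - t ^ 3) * (2 * t - 3 * t ^ 2)) • B v v := by
    simp only [polynomialLoop, deriv_polynomialLoop, map_add, map_smul, add_apply, smul_apply]
    module
  have hcoeff : ∫ t in (0:ℝ)..1, (t - t ^ 2) * (1 - 2 * t) = 0 ∧
      ∫ t in (0:ℝ)..1, (t - t ^ 2) * (2 * t - 3 * t ^ 2) = 1 / 60 ∧
      ∫ t in (0:ℝ)..1, (t ^ 2 - t ^ 3) * (1 - 2 * t) = -1 / 60 ∧
      ∫ t in (0:ℝ)..1, (t ^ 2 - t ^ 3) * (2 * t - 3 * t ^ 2) = 0 := by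
    refine ⟨?_, ?_, ?_, ?_⟩ <;> ring_nf <;>
      simp (disch := exact Continuous.intervalIntegrable (by fun_prop) _ _) only
        [intervalIntegral.integral_add, intervalIntegral.integral_sub,
          intervalIntegral.integral_mul_const, integral_pow] <;> norm_num
  simp (disch := exact Continuous.intervalIntegrable (by fun_prop) _ _) only
    [hexpand, intervalIntegral.integral_add, intervalIntegral.integral_smul_const]
  rw [hcoeff.1, hcoeff.2.1, hcoeff.2.2.1, hcoeff.2.2.2]
  module

theorem fderiv_apply_comm_of_loop_integral_eq_zero [CompleteSpace E] {η : F → F →L[ℝ] E}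
    (hη : ContDiff ℝ 1 η)
    (hloop : ∀ γ : ℝ → F, ContDiff ℝ ∞ γ → γ 0 = γ 1 →
      ∫ t in (0:ℝ)..1, η (γ t) (deriv γ t) = 0)
    (x u v : F) : fderiv ℝ η x u v = fderiv ℝ η x v u := by
  have h := integral_fderiv_loop_eq_zero hη hloop x (by unfold polynomialLoop; fun_prop)
    (by norm_num [polynomialLoop] : polynomialLoop u v 0 = polynomialLoop u v 1)
  rw [integral_apply_polynomialLoop, smul_eq_zero, sub_eq_zero] at h
  exact h.resolve_left (by norm_num)

end LoopIntegrals

section Manifold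

variable {EM : Type*} [NormedAddCommGroup EM] [NormedSpace ℝ EM]
  {HM : Type*} [TopologicalSpace HM] {I : ModelWithCorners ℝ EM HM}
  {M : Type*} [TopologicalSpace M] [ChartedSpace HM M]
  {E : Type*} [NormedAddCommGroup E] [NormedSpace ℝ E]
  {F : Type*} [NormedAddCommGroup F] [NormedSpace ℝ F]

variable (I) in
noncomputable def lineIntegral (θ : ∀ p : M, TangentSpace I p →L[ℝ] E) (α : ℝ → M) : E :=
  ∫ t in (0:ℝ)..1, θ (α t) (mfderiv 𝓘(ℝ, ℝ) I α t 1)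

variable (I) in
def HomotopicRelEndpoints (α₀ α₁ : ℝ → M) : Prop :=
  ∃ H : ℝ × ℝ → M, ContMDiff 𝓘(ℝ, ℝ × ℝ) I ∞ H ∧
    (∀ t, H (0, t) = α₀ t) ∧ (∀ t, H (1, t) = α₁ t) ∧
    (∀ s, H (s, 0) = α₀ 0) ∧ (∀ s, H (s, 1) = α₀ 1)

variable (I) in
def HasHomotopyInvariantLoopIntegrals (θ : ∀ p : M, TangentSpace I p →L[ℝ] E) : Prop :=
  ∀ α₀ α₁ : ℝ → M, ContMDiff 𝓘(ℝ, ℝ) I ∞ α₀ → ContMDiff 𝓘(ℝ, ℝ) I ∞ α₁ →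
    α₀ 0 = α₀ 1 → α₁ 0 = α₁ 1 → HomotopicRelEndpoints I α₀ α₁ →
    lineIntegral I θ α₀ = lineIntegral I θ α₁

noncomputable def pullbackForm (θ : ∀ p : M, TangentSpace I p →L[ℝ] E) (σ : F → M) (y : F) :
    F →L[ℝ] E :=
  (θ (σ y)).comp (mfderiv 𝓘(ℝ, F) I σ y)

theorem lineIntegral_const (θ : ∀ p : M, TangentSpace I p →L[ℝ] E) (p : M) :
    lineIntegral I θ (fun _ => p) = 0 := by
  simp [lineIntegral, mfderiv_const]

theorem lineIntegral_comp_eq_integral_pullbackForm (θ : ∀ p : M, TangentSpace I p →L[ℝ] E)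
    {σ : F → M} (hσ : MDifferentiable 𝓘(ℝ, F) I σ) {γ : ℝ → F} (hγ : Differentiable ℝ γ) :
    lineIntegral I θ (σ ∘ γ) = ∫ t in (0:ℝ)..1, pullbackForm θ σ (γ t) (deriv γ t) := by
  refine intervalIntegral.integral_congr fun t _ => ?_
  simp only [Function.comp_apply, pullbackForm,
    mfderiv_comp_apply t (hσ (γ t)) (hγ t).mdifferentiableAt, mfderiv_eq_fderiv]
  rfl

theorem lineIntegral_comp_loop_eq_zero {θ : ∀ p : M, TangentSpace I p →L[ℝ] E}
    (hθ : HasHomotopyInvariantLoopIntegrals I θ) {σ : F → M} (hσ : ContMDiff 𝓘(ℝ, F) I ∞ σ)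
    {γ : ℝ → F} (hγ : ContDiff ℝ ∞ γ) (hγ01 : γ 0 = γ 1) : lineIntegral I θ (σ ∘ γ) = 0 := by
  rw [hθ (σ ∘ γ) (fun _ => σ (γ 0)) (hσ.comp hγ.contMDiff) contMDiff_const
    (by simp [hγ01]) rfl ?_, lineIntegral_const]
  refine ⟨fun p => σ (γ p.2 + p.1 • (γ 0 - γ p.2)), ?_, ?_, ?_, ?_, ?_⟩
  · exact hσ.comp (by fun_prop : ContDiff ℝ ∞ _).contMDiff
  all_goals simp [hγ01]

theorem contMDiff_constVectorField (v : F) :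
    ContMDiff 𝓘(ℝ, F) 𝓘(ℝ, F).tangent ∞ (fun y : F => (⟨y, v⟩ : TangentBundle 𝓘(ℝ, F) F)) := by
  intro y
  refine (Bundle.contMDiffAt_section (E := TangentSpace 𝓘(ℝ, F)) (s := fun _ => v) y).2 ?_
  simpa using contMDiffAt_const

theorem contDiff_pullbackForm [IsManifold I ∞ M] [FiniteDimensional ℝ F]
    {θ : ∀ p : M, TangentSpace I p →L[ℝ] E}
    (hθ : ContMDiff I.tangent 𝓘(ℝ, E) ∞ (fun v : TangentBundle I M => θ v.proj v.2))
    {σ : F → M} (hσ : ContMDiff 𝓘(ℝ, F) I ∞ σ) : ContDiff ℝ ∞ (pullbackForm θ σ) :=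
  contDiff_clm_apply_iff.2 fun v =>
    ((hθ.comp (hσ.contMDiff_tangentMap le_rfl)).comp (contMDiff_constVectorField v)).contDiff

end Manifold

theorem stmt8_general
    {EM : Type} [NormedAddCommGroup EM] [NormedSpace ℝ EM]
    {HM : Type} [TopologicalSpace HM] {I : ModelWithCorners ℝ EM HM}
    {M : Type} [TopologicalSpace M] [ChartedSpace HM M] [IsManifold I (⊤ : ℕ∞) M]
    {E : Type} [NormedAddCommGroup E] [NormedSpace ℝ E] [FiniteDimensional ℝ E]
    (θ : ∀ p : M, TangentSpace I p →L[ℝ] E)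
    (hθ : ContMDiff I.tangent 𝓘(ℝ, E) (⊤ : ℕ∞) (fun v : TangentBundle I M => θ v.proj v.2))
    (hint : ∀ α₀ α₁ : ℝ → M, ContMDiff 𝓘(ℝ, ℝ) I (⊤ : ℕ∞) α₀ → ContMDiff 𝓘(ℝ, ℝ) I (⊤ : ℕ∞) α₁ →
      α₀ 0 = α₀ 1 → α₁ 0 = α₁ 1 →
      (∃ F : ℝ × ℝ → M, ContMDiff 𝓘(ℝ, ℝ × ℝ) I (⊤ : ℕ∞) F ∧
        (∀ t, F (0, t) = α₀ t) ∧ (∀ t, F (1, t) = α₁ t) ∧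
        (∀ s, F (s, 0) = α₀ 0) ∧ (∀ s, F (s, 1) = α₀ 1)) →
      (∫ t in (0:ℝ)..1, θ (α₀ t) (mfderiv 𝓘(ℝ, ℝ) I α₀ t (1 : ℝ))) =
        ∫ t in (0:ℝ)..1, θ (α₁ t) (mfderiv 𝓘(ℝ, ℝ) I α₁ t (1 : ℝ))) :
    ∀ σ : ℝ × ℝ → M, ContMDiff 𝓘(ℝ, ℝ × ℝ) I (⊤ : ℕ∞) σ → ∀ x : ℝ × ℝ,
      fderiv ℝ (fun y => θ (σ y) (mfderiv 𝓘(ℝ, ℝ × ℝ) I σ y ((0, 1) : ℝ × ℝ))) x (1, 0)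
        = fderiv ℝ (fun y => θ (σ y) (mfderiv 𝓘(ℝ, ℝ × ℝ) I σ y ((1, 0) : ℝ × ℝ))) x
            (0, 1) := by
  intro σ hσ x
  have hη : ContDiff ℝ ∞ (pullbackForm θ σ) := contDiff_pullbackForm hθ hσ
  have hloop (γ : ℝ → ℝ × ℝ) (hγ : ContDiff ℝ ∞ γ) (hγ01 : γ 0 = γ 1) :
      ∫ t in (0:ℝ)..1, pullbackForm θ σ (γ t) (deriv γ t) = 0 := by
    rw [← lineIntegral_comp_eq_integral_pullbackForm θ (hσ.mdifferentiable (by simp))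
      (hγ.differentiable (by simp))]
    exact lineIntegral_comp_loop_eq_zero hint hσ hγ hγ01
  have hpartial (u v : ℝ × ℝ) :
      fderiv ℝ (fun y => pullbackForm θ σ y v) x u = fderiv ℝ (pullbackForm θ σ) x u v := by
    simp [((hη.differentiable (by simp) x).hasFDerivAt.clm_apply (hasFDerivAt_const v x)).fderiv]
  exact (hpartial _ _).trans <| (fderiv_apply_comm_of_loop_integral_eq_zero
    (hη.of_le (by simp)) hloop x (1, 0) (0, 1)).trans (hpartial _ _).symm

/-- On a connected finite-dimensional smooth manifold `M`, a smooth
1-form `θ` with values in a finite-dimensional vector space `E` whose line integrals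
over smoothly homotopic (rel endpoints) closed curves agree is closed.  Closedness
`dθ = 0` is expressed by the symmetry of the derivative of the pullback of `θ` along
every smooth map `σ : ℝ² → M`. -/
theorem stmt8
    {EM : Type} [NormedAddCommGroup EM] [NormedSpace ℝ EM] [FiniteDimensional ℝ EM]
    {HM : Type} [TopologicalSpace HM] {I : ModelWithCorners ℝ EM HM}
    {M : Type} [TopologicalSpace M] [ChartedSpace HM M] [IsManifold I (⊤ : ℕ∞) M]
    [ConnectedSpace M]
    {E : Type} [NormedAddCommGroup E] [NormedSpace ℝ E] [FiniteDimensional ℝ E]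
    (θ : ∀ p : M, TangentSpace I p →L[ℝ] E)
    (hθ : ContMDiff I.tangent 𝓘(ℝ, E) (⊤ : ℕ∞) (fun v : TangentBundle I M => θ v.proj v.2))
    (hint : ∀ α₀ α₁ : ℝ → M, ContMDiff 𝓘(ℝ, ℝ) I (⊤ : ℕ∞) α₀ → ContMDiff 𝓘(ℝ, ℝ) I (⊤ : ℕ∞) α₁ →
      α₀ 0 = α₀ 1 → α₁ 0 = α₁ 1 →
      (∃ F : ℝ × ℝ → M, ContMDiff 𝓘(ℝ, ℝ × ℝ) I (⊤ : ℕ∞) F ∧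
        (∀ t, F (0, t) = α₀ t) ∧ (∀ t, F (1, t) = α₁ t) ∧
        (∀ s, F (s, 0) = α₀ 0) ∧ (∀ s, F (s, 1) = α₀ 1)) →
      (∫ t in (0:ℝ)..1, θ (α₀ t) (mfderiv 𝓘(ℝ, ℝ) I α₀ t (1 : ℝ))) =
        ∫ t in (0:ℝ)..1, θ (α₁ t) (mfderiv 𝓘(ℝ, ℝ) I α₁ t (1 : ℝ))) :
    ∀ σ : ℝ × ℝ → M, ContMDiff 𝓘(ℝ, ℝ × ℝ) I (⊤ : ℕ∞) σ → ∀ x : ℝ × ℝ,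
      fderiv ℝ (fun y => θ (σ y) (mfderiv 𝓘(ℝ, ℝ × ℝ) I σ y ((0, 1) : ℝ × ℝ))) x (1, 0)
        = fderiv ℝ (fun y => θ (σ y) (mfderiv 𝓘(ℝ, ℝ × ℝ) I σ y ((1, 0) : ℝ × ℝ))) x
            (0, 1) :=
  stmt8_general θ hθ hint
end
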